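/- Backward gradient with respect to R through the posterior covariance: let G⁺ = ∂L/∂P⁺ be a symmetric d×d matrix. Under the Kalman update hypotheses, the gradient of L with respect to R obtained via the chain rule through the identity (P⁺)^{-1} = (P⁻)^{-1} + H^T R^{-1} H equals K^T G⁺ K, i.e., R^{-1} H P⁺ G⁺ P⁺ H^T R^{-1} = K^T G⁺ K. -/

import Mathlib

/-- Backward gradient with respect to `R` through the posterior covariance:
`R⁻¹ H P⁺ G⁺ P⁺ Hᵀ R⁻¹ = Kᵀ G⁺ K` for a symmetric gradient `G⁺`. -/
theorem kalman_backward_R {d m : ℕ}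
    (Pm : Matrix (Fin d) (Fin d) ℝ) (R : Matrix (Fin m) (Fin m) ℝ)
    (H : Matrix (Fin m) (Fin d) ℝ)
    (hPm : Pm.PosDef) (hR : R.PosDef)
    (S : Matrix (Fin m) (Fin m) ℝ) (hS : S = H * Pm * H.transpose + R)
    (K : Matrix (Fin d) (Fin m) ℝ) (hK : K = Pm * H.transpose * S⁻¹)
    (Pp : Matrix (Fin d) (Fin d) ℝ) (hPp : Pp = (1 - K * H) * Pm)
    (G : Matrix (Fin d) (Fin d) ℝ) (hG : G.transpose = G) :
    R⁻¹ * H * Pp * G * Pp * H.transpose * R⁻¹ =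
      K.transpose * G * K := by
  have hPmSym : Pm.transpose = Pm := hPm.isHermitian
  have hRSym : R.transpose = R := hR.isHermitian
  have hHPHT : (H * Pm * H.transpose).PosSemidef := by
    have := hPm.posSemidef.mul_mul_conjTranspose_same H
    simpa [Matrix.conjTranspose_eq_transpose_of_trivial, Matrix.mul_assoc] using this
  have hSpd : S.PosDef := by
    rw [hS]; exact Matrix.PosDef.posSemidef_add hHPHT hR
  have hSSym : S.transpose = S := hSpd.isHermitian
  have hSdet : IsUnit S.det := hSpd.det_pos.ne'.isUnit
  have hRdet : IsUnit R.det := hR.det_pos.ne'.isUnit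
  have hSinv : S⁻¹ * S = 1 := Matrix.nonsing_inv_mul S hSdet
  have hSinv' : S * S⁻¹ = 1 := Matrix.mul_nonsing_inv S hSdet
  have hRinv : R * R⁻¹ = 1 := Matrix.mul_nonsing_inv R hRdet
  have hSinvSym : (S⁻¹).transpose = S⁻¹ := by
    rw [Matrix.transpose_nonsing_inv, hSSym]
  have hRinvSym : (R⁻¹).transpose = R⁻¹ := by
    rw [Matrix.transpose_nonsing_inv, hRSym]
  -- H Pm Hᵀ = S - R
  have hHPmHT : H * Pm * H.transpose = S - R := by rw [hS]; exact (add_sub_cancel_right _ _).symm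
  -- K S = Pm Hᵀ
  have hKS : K * S = Pm * H.transpose := by
    rw [hK, Matrix.mul_assoc, hSinv, Matrix.mul_one]
  -- Pp Hᵀ = K R
  have hPpHT : Pp * H.transpose = K * R := by
    have : Pp * H.transpose
        = Pm * H.transpose - K * (H * Pm * H.transpose) := by
      rw [hPp]; simp [Matrix.sub_mul, Matrix.mul_assoc]
    rw [this, hHPmHT, Matrix.mul_sub, hKS, sub_sub_cancel]
  -- Pp Hᵀ R⁻¹ = K
  have hKey : Pp * H.transpose * R⁻¹ = K := by
    rw [hPpHT, Matrix.mul_assoc, hRinv, Matrix.mul_one]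
  -- Pp is symmetric
  have hKT : K.transpose = S⁻¹ * H * Pm := by
    rw [hK, Matrix.transpose_mul, Matrix.transpose_mul, hSinvSym,
      Matrix.transpose_transpose, hPmSym, Matrix.mul_assoc]
  have hPpSym : Pp.transpose = Pp := by
    rw [hPp, Matrix.transpose_mul, Matrix.transpose_sub, Matrix.transpose_one,
      Matrix.transpose_mul, hPmSym, hKT, hK]
    simp [Matrix.sub_mul, Matrix.mul_sub, Matrix.mul_assoc]
  -- R⁻¹ H Pp = Kᵀ
  have hKey2 : R⁻¹ * H * Pp = K.transpose := by
    have := congrArg Matrix.transpose hKey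
    rw [Matrix.transpose_mul, Matrix.transpose_mul, hRinvSym,
      Matrix.transpose_transpose, hPpSym, ← Matrix.mul_assoc] at this
    exact this
  calc R⁻¹ * H * Pp * G * Pp * H.transpose * R⁻¹
      = (R⁻¹ * H * Pp) * G * (Pp * H.transpose * R⁻¹) := by
        simp only [Matrix.mul_assoc]
    _ = K.transpose * G * K := by rw [hKey2, hKey]
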